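/- arXiv:1505.00459 — 2 statements merged into one kernel-verified Lean document; each statement's English description precedes it below -/
import Mathlib

section
/- Let ‖·‖ be a norm on ℝ² with unit sphere S. If there exist c, d ∈ S with ‖c − d‖ > 1 such that the segment [c, d] is contained in S, then ‖·‖ is not a URTC-norm. -/
/-- `N` is a norm on `ℝ²`. -/
structure IsNorm (N : ℝ × ℝ → ℝ) : Prop where
  add_le : ∀ x y : ℝ × ℝ, N (x + y) ≤ N x + N y
  smul_eq : ∀ (c : ℝ) (x : ℝ × ℝ), N (c • x) = |c| * N x
  eq_zero_of : ∀ x : ℝ × ℝ, N x = 0 → x = 0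

/-- `N` is a URTC-norm: for every `a b` at `N`-distance `1`, there are exactly two
points `x` with `N (a - x) = 1` and `N (b - x) = 1`. -/
def IsURTC (N : ℝ × ℝ → ℝ) : Prop :=
  ∀ a b : ℝ × ℝ, N (a - b) = 1 →
    {x : ℝ × ℝ | N (a - x) = 1 ∧ N (b - x) = 1}.encard = 2

/-!
Normalise `c - d` to a unit vector `u = s • (c - d)` with `s = (N (c - d))⁻¹ < 1`. Every point
`x` of `[c, d]` whose shift `x + s • (d - c)` still lies in `[c, d]` is at distance `1` from both
`0` and `u`, since `0 - x = -x` and `u - x = -(x + s • (d - c))`. These points form a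
non-degenerate subsegment of `[c, d]`, so the pair `0, u` has infinitely many common unit
neighbours instead of exactly two.
-/

open AffineMap

section Segment

variable {E : Type*} [AddCommGroup E] [Module ℝ E]

theorem lineMap_add_smul_sub (c d : E) (t s : ℝ) :
    lineMap c d t + s • (d - c) = lineMap c d (t + s) := by
  simp only [lineMap_apply_module']
  module

theorem setOf_mem_segment_add_smul_mem_segment_infinite {c d : E} (hcd : c ≠ d) {s : ℝ}
    (hs₀ : 0 ≤ s) (hs₁ : s < 1) :
    {x | x ∈ segment ℝ c d ∧ x + s • (d - c) ∈ segment ℝ c d}.Infinite := by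
  have hmem : ∀ t ∈ Set.Icc (0 : ℝ) 1, lineMap c d t ∈ segment ℝ c d := fun t ht ↦ by
    rw [segment_eq_image_lineMap]
    exact Set.mem_image_of_mem _ ht
  refine ((Set.Icc_infinite (sub_pos.2 hs₁)).image (lineMap_injective ℝ hcd).injOn).mono ?_
  rintro _ ⟨t, ⟨ht₀, ht₁⟩, rfl⟩
  refine ⟨hmem t ⟨ht₀, by linarith⟩, ?_⟩
  rw [lineMap_add_smul_sub]
  exact hmem (t + s) ⟨by linarith, by linarith⟩

end Segment

namespace IsNorm

variable {N : ℝ × ℝ → ℝ}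

theorem map_neg (hN : IsNorm N) (x : ℝ × ℝ) : N (-x) = N x := by
  simpa using hN.smul_eq (-1) x

theorem map_zero (hN : IsNorm N) : N 0 = 0 := by
  simpa using hN.smul_eq 0 0

theorem map_inv_smul_self (hN : IsNorm N) {x : ℝ × ℝ} (hx : 0 < N x) :
    N ((N x)⁻¹ • x) = 1 := by
  rw [hN.smul_eq, abs_of_pos (inv_pos.2 hx), inv_mul_cancel₀ hx.ne']

end IsNorm

theorem not_URTC_of_long_segment_general (N : ℝ × ℝ → ℝ) (hN : IsNorm N)
    (c d : ℝ × ℝ) (hcd : 1 < N (c - d))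
    (hseg : segment ℝ c d ⊆ {x : ℝ × ℝ | N x = 1}) :
    ¬ IsURTC N := by
  intro hURTC
  set s := (N (c - d))⁻¹
  set u := s • (c - d)
  have hc_ne_d : c ≠ d := by
    rintro rfl
    rw [sub_self, hN.map_zero] at hcd
    exact absurd hcd zero_le_one.not_gt
  have hu : N (0 - u) = 1 := by
    rw [zero_sub, hN.map_neg, hN.map_inv_smul_self (zero_lt_one.trans hcd)]
  have hinf : {x | N (0 - x) = 1 ∧ N (u - x) = 1}.Infinite := by
    refine (setOf_mem_segment_add_smul_mem_segment_infinite hc_ne_d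
      (inv_nonneg.2 (zero_le_one.trans hcd.le)) (inv_lt_one_of_one_lt₀ hcd)).mono ?_
    rintro x ⟨hx, hx_shift⟩
    have hux : u - x = -(x + s • (d - c)) := by simp only [u]; module
    refine ⟨?_, ?_⟩
    · rw [zero_sub, hN.map_neg]
      exact hseg hx
    · rw [hux, hN.map_neg]
      exact hseg hx_shift
  have htwo := hURTC 0 u hu
  rw [hinf.encard_eq] at htwo
  simp at htwo

/-- If the unit sphere of `N` contains a segment whose endpoints are at distance `> 1`,
then `N` is not a URTC-norm. -/
theorem not_URTC_of_long_segment (N : ℝ × ℝ → ℝ) (hN : IsNorm N)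
    (c d : ℝ × ℝ) (hc : N c = 1) (hd : N d = 1) (hcd : 1 < N (c - d))
    (hseg : segment ℝ c d ⊆ {x : ℝ × ℝ | N x = 1}) :
    ¬ IsURTC N :=
  not_URTC_of_long_segment_general N hN c d hcd hseg
end

section
/- Let ‖·‖ be an arbitrary norm on ℝ². Suppose a, b ∈ ℝ² with γ := ‖a − b‖ > 0, and let α, β ≥ 0 be real numbers satisfying |β − γ| ≤ α ≤ β + γ. Then there exists a point c ∈ ℝ² such that ‖a − c‖ = β and ‖b − c‖ = α. -/
/-! Let `v` range over `{0}ᶜ`, which is connected in dimension at least two. The point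
`a + (β / ‖v‖) • v` lies on the sphere of radius `β` about `a`, and its distance to `b` depends
continuously on `v`: it is `|β - γ|` for `v = b - a` and `β + γ` for `v = a - b`. The intermediate
value theorem gives a `v` at which it is `α`. A norm on `ℝ²` is convex, hence continuous, so this
applies to `N`. -/

namespace Seminorm

variable {E : Type*} [AddCommGroup E] [Module ℝ E]

lemma map_div_self_smul (p : Seminorm ℝ E) {β : ℝ} (hβ : 0 ≤ β) {v : E} (hv : p v ≠ 0) :
    p ((β / p v) • v) = β := by
  rw [map_smul_eq_mul, Real.norm_eq_abs, abs_div, abs_of_nonneg hβ,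
    abs_of_nonneg (apply_nonneg p v), div_mul_cancel₀ _ hv]

variable [TopologicalSpace E] [IsTopologicalAddGroup E] [ContinuousSMul ℝ E]

theorem exists_triangle (hE : 1 < Module.rank ℝ E) (p : Seminorm ℝ E) (hp : Continuous p)
    (hp0 : ∀ x, p x = 0 → x = 0) {a b : E} {α β : ℝ} (hab : 0 < p (a - b)) (hβ : 0 ≤ β)
    (h1 : |β - p (a - b)| ≤ α) (h2 : α ≤ β + p (a - b)) :
    ∃ c, p (a - c) = β ∧ p (b - c) = α := by
  rw [← map_sub_rev] at hab h1 h2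
  set γ := p (b - a) with hγ
  have hne : ∀ v ∈ ({0}ᶜ : Set E), p v ≠ 0 := fun v hv h ↦ hv (hp0 v h)
  set f : E → ℝ := fun v ↦ p (b - (a + (β / p v) • v))
  have hf : ContinuousOn f {0}ᶜ :=
    hp.comp_continuousOn <| continuousOn_const.sub <| continuousOn_const.add <|
      (continuousOn_const.div hp.continuousOn hne).smul continuousOn_id
  have hf_near : f (b - a) = |β - γ| := calc
    f (b - a) = |(1 - β / γ) * γ| := by
      simp only [f, ← hγ]
      rw [show b - (a + (β / γ) • (b - a)) = (1 - β / γ) • (b - a) by module, map_smul_eq_mul,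
        Real.norm_eq_abs, abs_mul, abs_of_pos hab]
    _ = |β - γ| := by rw [sub_mul, one_mul, div_mul_cancel₀ _ hab.ne', abs_sub_comm]
  have hf_far : f (a - b) = β + γ := calc
    f (a - b) = (1 + β / γ) * γ := by
      simp only [f, map_sub_rev p a b, ← hγ]
      rw [show b - (a + (β / γ) • (a - b)) = (1 + β / γ) • (b - a) by module, map_smul_eq_mul,
        Real.norm_eq_abs, abs_of_nonneg (by positivity)]
    _ = β + γ := by rw [add_mul, one_mul, div_mul_cancel₀ _ hab.ne', add_comm]
  have hS := (isPathConnected_compl_singleton_of_one_lt_rank hE (0 : E)).isConnected.isPreconnected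
  have hba : b ≠ a := fun h ↦ hab.ne' (by rw [hγ, h, sub_self, map_zero])
  obtain ⟨v, hv, hfv⟩ := hS.intermediate_value (sub_ne_zero.mpr hba) (sub_ne_zero.mpr hba.symm) hf
    (by rw [hf_near, hf_far]; exact ⟨h1, h2⟩)
  refine ⟨a + (β / p v) • v, ?_, hfv⟩
  rw [sub_add_cancel_left, map_neg_eq_map, map_div_self_smul p hβ (hne v hv)]

end Seminorm

namespace IsNorm

variable {N : ℝ × ℝ → ℝ}

def toSeminorm (hN : IsNorm N) : Seminorm ℝ (ℝ × ℝ) :=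
  Seminorm.of N hN.add_le fun c x ↦ by rw [hN.smul_eq, Real.norm_eq_abs]

lemma continuous (hN : IsNorm N) : Continuous N :=
  continuousOn_univ.mp (hN.toSeminorm.convexOn.continuousOn isOpen_univ)

end IsNorm

/-- Triangle construction: for any norm on `ℝ²`, if `|β - γ| ≤ α ≤ β + γ` with
`γ = N (a - b) > 0` and `α, β ≥ 0`, there is `c` with `N (a - c) = β`, `N (b - c) = α`. -/
theorem exists_triangle (N : ℝ × ℝ → ℝ) (hN : IsNorm N)
    (a b : ℝ × ℝ) (γ α β : ℝ) (hγ : N (a - b) = γ) (hγpos : 0 < γ)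
    (hβ : 0 ≤ β) (h1 : |β - γ| ≤ α) (h2 : α ≤ β + γ) :
    ∃ c : ℝ × ℝ, N (a - c) = β ∧ N (b - c) = α := by
  subst hγ
  exact hN.toSeminorm.exists_triangle (by rw [rank_prod', Module.rank_self]; norm_num)
    hN.continuous hN.eq_zero_of hγpos hβ h1 h2
end
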